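/- arXiv:2601.19058 — 3 statements merged into one kernel-verified Lean document; each statement's English description precedes it below -/
import Mathlib

section
/- Let ν be the Bernoulli(1/2,1/2) measure on X = {0,1}^ℕ, T the odometer map, and A = ⋃_{i=5}^{∞} ⋃_{j=0}^{i-1} T^j([0^i]). Then 5/32 ≤ ν(A) ≤ 6/32. -/
open MeasureTheory Filter Topology
open scoped ENNReal

/-- The odometer map on `X = {0,1}^ℕ` (adding one with carry in binary). -/
def Tod (x : ℕ → Bool) : ℕ → Bool := fun k =>
  if ∀ i < k, x i = true then !(x k) else x k

/-- The inverse of the odometer map (subtracting one with borrow). -/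
def TodInv (x : ℕ → Bool) : ℕ → Bool := fun k =>
  if ∀ i < k, x i = false then !(x k) else x k

/-- The number determined by the first `k` binary digits of `x`. -/
def DN (k : ℕ) (x : ℕ → Bool) : ℕ := ∑ i ∈ Finset.range k, 2 ^ i * (x i).toNat

/-- The cylinder `[0^i]` of sequences starting with `i` zeros. -/
def cyl0 (i : ℕ) : Set (ℕ → Bool) := {x | ∀ j < i, x j = false}

/-- `A = ⋃_{i=5}^∞ ⋃_{j=0}^{i-1} T^j([0^i])`. -/
def Aset : Set (ℕ → Bool) := ⋃ (i : ℕ) (_ : 5 ≤ i) (j : ℕ) (_ : j < i), Tod^[j] '' cyl0 i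

/-- `A_k = ⋃_{i=5}^{k} ⋃_{j=0}^{i-1} T^j([0^i])`. -/
def Ak (k : ℕ) : Set (ℕ → Bool) :=
  ⋃ (i : ℕ) (_ : 5 ≤ i) (_ : i ≤ k) (j : ℕ) (_ : j < i), Tod^[j] '' cyl0 i

/-- `E_k = ⋃_{i=k+1}^∞ ⋃_{j=0}^{i-1} T^j([0^i])`. -/
def Ek (k : ℕ) : Set (ℕ → Bool) :=
  ⋃ (i : ℕ) (_ : k + 1 ≤ i) (j : ℕ) (_ : j < i), Tod^[j] '' cyl0 i

/-!
Reading the first `n` digits of `x` as the binary number `DN n x`, the odometer acts on it as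
`+1 mod 2^n`, so `T^j([0^i])` is the cylinder `{DN i x = j}` of measure `2^{-i}` whenever `j < 2^i`.
For `j < 5` all these cylinders lie in `{DN 5 x = j}`, and `T^j([0^5])` is that cylinder, giving
`ν(A) ≥ 5/32`. For `j ≥ 5` they lie in `{DN (j+1) x = j}`, of measure `2^{-(j+1)}`, and these
tails add up to `1/32`.
-/

section Digits

lemma DN_succ (n : ℕ) (x : ℕ → Bool) : DN (n + 1) x = DN n x + 2 ^ n * (x n).toNat := by
  simp [DN, Finset.sum_range_succ]

lemma DN_lt_two_pow (n : ℕ) (x : ℕ → Bool) : DN n x < 2 ^ n := by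
  induction n with
  | zero => simp [DN]
  | succ n ih =>
    rw [DN_succ, pow_succ]
    cases x n <;> simp <;> omega

lemma DN_eq_DN_iff {n : ℕ} {x y : ℕ → Bool} : DN n x = DN n y ↔ ∀ i < n, x i = y i := by
  induction n with
  | zero => simp [DN]
  | succ n ih =>
    have hx := DN_lt_two_pow n x
    have hy := DN_lt_two_pow n y
    have hsplit : DN (n + 1) x = DN (n + 1) y ↔ DN n x = DN n y ∧ x n = y n := by
      rw [DN_succ, DN_succ]
      cases x n <;> cases y n <;> simp <;> omega
    rw [hsplit, ih]
    constructor
    · rintro ⟨hlow, htop⟩ i hi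
      rcases Nat.lt_succ_iff_lt_or_eq.mp hi with hi | rfl
      exacts [hlow i hi, htop]
    · intro h
      exact ⟨fun i hi => h i (by omega), h n n.lt_succ_self⟩

lemma DN_testBit (n j : ℕ) : DN n (fun i => j.testBit i) = j % 2 ^ n := by
  induction n with
  | zero => simp [DN, Nat.mod_one]
  | succ n ih => rw [DN_succ, ih, Nat.mod_pow_succ, Nat.toNat_testBit]

lemma DN_eq_iff_of_lt {n j : ℕ} (hj : j < 2 ^ n) {x : ℕ → Bool} :
    DN n x = j ↔ ∀ i < n, x i = j.testBit i := by
  rw [← DN_eq_DN_iff, DN_testBit, Nat.mod_eq_of_lt hj]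

lemma DN_eq_two_pow_sub_one_iff {n : ℕ} {x : ℕ → Bool} :
    DN n x = 2 ^ n - 1 ↔ ∀ i < n, x i = true := by
  rw [DN_eq_iff_of_lt (Nat.sub_lt Nat.one_le_two_pow one_pos)]
  exact forall₂_congr fun i hi => by rw [Nat.testBit_two_pow_sub_one, decide_eq_true hi]

lemma DN_mod_two_pow {m n : ℕ} (hmn : m ≤ n) (x : ℕ → Bool) : DN n x % 2 ^ m = DN m x := by
  have hdigits := (DN_eq_iff_of_lt (DN_lt_two_pow n x)).mp rfl
  rw [← DN_testBit, DN_eq_DN_iff]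
  exact fun i hi => (hdigits i (by omega)).symm

lemma DN_eq_of_le {m n j : ℕ} (hmn : m ≤ n) (hj : j < 2 ^ m) {x : ℕ → Bool} (h : DN n x = j) :
    DN m x = j := by
  rw [← DN_mod_two_pow hmn, h, Nat.mod_eq_of_lt hj]

lemma measurable_DN (n : ℕ) : Measurable (DN n) := by
  unfold DN
  fun_prop

end Digits

section Odometer

lemma Tod_apply_of_exists_false {n k : ℕ} {x : ℕ → Bool} (h : ∃ i < n, x i = false)
    (hk : n ≤ k) : Tod x k = x k := by
  obtain ⟨i, hi, hxi⟩ := h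
  refine if_neg fun hall => ?_
  simp [hall i (by omega)] at hxi

lemma DN_Tod (n : ℕ) (x : ℕ → Bool) : DN n (Tod x) = (DN n x + 1) % 2 ^ n := by
  induction n with
  | zero => simp [DN]
  | succ n ih =>
    have hlt := DN_lt_two_pow n x
    rw [DN_succ, DN_succ, ih, pow_succ]
    by_cases hall : ∀ i < n, x i = true
    · have hx : DN n x + 1 = 2 ^ n := by
        rw [DN_eq_two_pow_sub_one_iff.mpr hall]; exact Nat.sub_add_cancel Nat.one_le_two_pow
      have htop : Tod x n = !x n := if_pos hall
      rw [hx, Nat.mod_self, htop]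
      cases x n
      · rw [show DN n x + 2 ^ n * false.toNat + 1 = 2 ^ n by simp [hx],
          Nat.mod_eq_of_lt (by omega)]
        simp
      · rw [show DN n x + 2 ^ n * true.toNat + 1 = 2 ^ n * 2 by simp; omega, Nat.mod_self]
        simp
    · push Not at hall
      have htop : Tod x n = x n := Tod_apply_of_exists_false (by simpa using hall) le_rfl
      have hnot : DN n x ≠ 2 ^ n - 1 := fun h => by
        obtain ⟨i, hi, hxi⟩ := hall
        exact hxi (DN_eq_two_pow_sub_one_iff.mp h i hi)
      rw [htop, Nat.mod_eq_of_lt (by omega : DN n x + 1 < 2 ^ n),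
        Nat.mod_eq_of_lt (by cases x n <;> simp <;> omega)]
      omega

lemma iterate_Tod_of_mem_cyl0 {n j : ℕ} (hj : j < 2 ^ n) {y : ℕ → Bool} (hy : y ∈ cyl0 n) :
    DN n (Tod^[j] y) = j ∧ ∀ k, n ≤ k → Tod^[j] y k = y k := by
  induction j with
  | zero => exact ⟨(DN_eq_iff_of_lt hj).mpr (by simpa [cyl0] using hy), fun _ _ => rfl⟩
  | succ j ih =>
    obtain ⟨hDN, htail⟩ := ih (by omega)
    have hnot_all : ∃ i < n, Tod^[j] y i = false := by
      by_contra! hall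
      have := DN_eq_two_pow_sub_one_iff.mpr (by simpa using hall)
      omega
    rw [Function.iterate_succ_apply', DN_Tod, hDN, Nat.mod_eq_of_lt hj]
    exact ⟨rfl, fun k hk => (Tod_apply_of_exists_false hnot_all hk).trans (htail k hk)⟩

lemma image_iterate_Tod_cyl0 {n j : ℕ} (hj : j < 2 ^ n) :
    Tod^[j] '' cyl0 n = {x | DN n x = j} := by
  ext x
  constructor
  · rintro ⟨y, hy, rfl⟩
    exact (iterate_Tod_of_mem_cyl0 hj hy).1
  · intro hx
    let y : ℕ → Bool := fun k => if k < n then false else x k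
    have hy : y ∈ cyl0 n := fun i hi => if_pos hi
    obtain ⟨hDN, htail⟩ := iterate_Tod_of_mem_cyl0 hj hy
    refine ⟨y, hy, funext fun k => ?_⟩
    by_cases hk : k < n
    · exact DN_eq_DN_iff.mp (hDN.trans hx.symm) k hk
    · rw [htail k (by omega)]
      exact if_neg hk

end Odometer

lemma biUnion_DN_five_subset_Aset : ⋃ j ∈ Finset.range 5, {x | DN 5 x = j} ⊆ Aset := by
  simp only [Set.iUnion_subset_iff, Finset.mem_range]
  intro j hj x hx
  rw [← image_iterate_Tod_cyl0 (by omega : j < 2 ^ 5)] at hx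
  simp only [Aset, Set.mem_iUnion]
  exact ⟨5, le_rfl, j, hj, hx⟩

lemma Aset_subset :
    Aset ⊆ (⋃ j ∈ Finset.range 5, {x | DN 5 x = j}) ∪ ⋃ j, {x | DN (j + 6) x = j + 5} := by
  simp only [Aset, Set.iUnion_subset_iff]
  rintro i hi j hji x hx
  rw [image_iterate_Tod_cyl0 (hji.trans i.lt_two_pow_self)] at hx
  by_cases hj : j < 5
  · exact Or.inl <| Set.mem_biUnion (Finset.mem_range.mpr hj)
      (DN_eq_of_le hi (by omega) hx)
  · obtain ⟨k, rfl⟩ : ∃ k, j = k + 5 := ⟨j - 5, by omega⟩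
    refine Or.inr <| Set.mem_iUnion.mpr ⟨k, DN_eq_of_le (by omega) ?_ hx⟩
    have := (k + 5).lt_two_pow_self
    rw [pow_succ]
    omega

section Measure

def IsFairCoinMeasure (ν : Measure (ℕ → Bool)) : Prop :=
  ∀ (n : ℕ) (a : ℕ → Bool), ν {x | ∀ i < n, x i = a i} = (2 : ℝ≥0∞)⁻¹ ^ n

variable {ν : Measure (ℕ → Bool)}

lemma measure_DN_eq {n j : ℕ} (hν : IsFairCoinMeasure ν) (hj : j < 2 ^ n) :
    ν {x | DN n x = j} = (2 : ℝ≥0∞)⁻¹ ^ n := by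
  simpa only [DN_eq_iff_of_lt hj] using hν n (fun i => j.testBit i)

lemma measure_biUnion_DN_five (hν : IsFairCoinMeasure ν) :
    ν (⋃ j ∈ Finset.range 5, {x | DN 5 x = j}) = 5 / 32 := by
  rw [measure_biUnion_finset]
  · rw [Finset.sum_congr rfl fun j hj => measure_DN_eq hν (by simp at hj; omega)]
    simp [← ENNReal.inv_pow, div_eq_mul_inv]
    norm_num
  · exact fun a _ b _ hab => Set.disjoint_left.mpr fun x hxa hxb => hab (hxa.symm.trans hxb)
  · exact fun j _ => measurable_DN 5 (measurableSet_singleton j)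

lemma measure_iUnion_DN_le (hν : IsFairCoinMeasure ν) :
    ν (⋃ j, {x | DN (j + 6) x = j + 5}) ≤ 1 / 32 := by
  refine (measure_iUnion_le _).trans_eq ?_
  have hlt (j : ℕ) : j + 5 < 2 ^ (j + 6) :=
    (j + 5).lt_two_pow_self.trans (Nat.pow_lt_pow_right one_lt_two (by omega))
  simp_rw [measure_DN_eq hν (hlt _), pow_add, ENNReal.tsum_mul_right, ENNReal.tsum_geometric_two]
  rw [pow_succ', ← mul_assoc, ENNReal.mul_inv_cancel two_ne_zero ENNReal.ofNat_ne_top, one_mul,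
    ← ENNReal.inv_pow, one_div]
  norm_num

end Measure

/-- `5/32 ≤ ν(A) ≤ 6/32`. -/
theorem stmt3 (ν : Measure (ℕ → Bool))
    (hν : ∀ (n : ℕ) (a : ℕ → Bool), ν {x | ∀ i < n, x i = a i} = (2 : ℝ≥0∞)⁻¹ ^ n) :
    5 / 32 ≤ ν Aset ∧ ν Aset ≤ 6 / 32 := by
  constructor
  · calc 5 / 32 = ν (⋃ j ∈ Finset.range 5, {x | DN 5 x = j}) := (measure_biUnion_DN_five hν).symm
      _ ≤ ν Aset := measure_mono biUnion_DN_five_subset_Aset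
  · calc ν Aset
        ≤ ν (⋃ j ∈ Finset.range 5, {x | DN 5 x = j}) + ν (⋃ j, {x | DN (j + 6) x = j + 5}) :=
          (measure_mono Aset_subset).trans (measure_union_le _ _)
      _ ≤ 5 / 32 + 1 / 32 := add_le_add (measure_biUnion_DN_five hν).le (measure_iUnion_DN_le hν)
      _ = 6 / 32 := by rw [ENNReal.div_add_div_same]; norm_num
end

section
/- Let Y be the subshift defined as the closure of Φ(X) in Z = {α,β}^ℤ, where Φ(x)_n = β if T^n(x) ∈ A and α otherwise, with T the odometer on X = {0,1}^ℕ and A = ⋃_{i=5}^{∞} ⋃_{j=0}^{i-1} T^j([0^i]). Then the word αβα is not in the language of Y; more generally, every word in L(Y) in which a β immediately follows an α must contain at least five consecutive β's after that α. -/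
open MeasureTheory Filter Topology
open scoped ENNReal

/-- `T^n` for `n : ℤ` (using the inverse odometer for negative `n`). -/
def zIter (n : ℤ) (x : ℕ → Bool) : ℕ → Bool :=
  if 0 ≤ n then Tod^[n.toNat] x else TodInv^[(-n).toNat] x

/-- The factor map `Φ : X → Z = {α,β}^ℤ`, with `β = true`, `α = false`:
`Φ(x)_n = β` iff `T^n(x) ∈ A`. -/
noncomputable def Phi (x : ℕ → Bool) : ℤ → Bool := fun n =>
  @decide (zIter n x ∈ Aset) (Classical.propDecidable _)

/-- The subshift `Y`, the closure of `Φ(X)` in the full two-sided shift. -/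
def Ysub : Set (ℤ → Bool) := closure (Set.range Phi)

/-- The shift map on `Z = {α,β}^ℤ`. -/
def shiftZ (z : ℤ → Bool) : ℤ → Bool := fun n => z (n + 1)

/-- The cylinder in `Z` given by a word `w` of length `n` placed at positions `0,…,n-1`. -/
def cylZ (n : ℕ) (w : Fin n → Bool) : Set (ℤ → Bool) :=
  {z | ∀ i : Fin n, z ((i : ℕ) : ℤ) = w i}

lemma todinv_tod (x : ℕ → Bool) : TodInv (Tod x) = x := by
  funext k
  by_cases h : ∀ i < k, x i = true
  · have h2 : ∀ i < k, Tod x i = false := by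
      intro i hi
      have hcond : ∀ j < i, x j = true := fun j hj => h j (lt_trans hj hi)
      simp only [Tod, if_pos hcond, h i hi, Bool.not_true]
    show (if ∀ i < k, Tod x i = false then !(Tod x k) else Tod x k) = x k
    rw [if_pos h2]
    simp only [Tod, if_pos h, Bool.not_not]
  · have hP : ∃ i, i < k ∧ x i = false := by
      push_neg at h
      obtain ⟨i, hik, hxi⟩ := h
      exact ⟨i, hik, by simpa using hxi⟩
    obtain ⟨hi0k, hxi0⟩ := Nat.find_spec hP
    have hmin : ∀ j, j < Nat.find hP → x j = true := by
      intro j hj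
      by_contra hc
      exact Nat.find_min hP hj ⟨lt_trans hj hi0k, by simpa using hc⟩
    have hT : Tod x (Nat.find hP) = true := by
      simp only [Tod, if_pos hmin, hxi0, Bool.not_false]
    have h3 : ¬ ∀ i < k, Tod x i = false := fun hall => by
      rw [hall _ hi0k] at hT; exact absurd hT (by simp)
    show (if ∀ i < k, Tod x i = false then !(Tod x k) else Tod x k) = x k
    rw [if_neg h3]
    simp only [Tod, if_neg h]

lemma tod_todinv (x : ℕ → Bool) : Tod (TodInv x) = x := by
  funext k
  by_cases h : ∀ i < k, x i = false
  · have h2 : ∀ i < k, TodInv x i = true := by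
      intro i hi
      have hcond : ∀ j < i, x j = false := fun j hj => h j (lt_trans hj hi)
      simp only [TodInv, if_pos hcond, h i hi, Bool.not_false]
    show (if ∀ i < k, TodInv x i = true then !(TodInv x k) else TodInv x k) = x k
    rw [if_pos h2]
    simp only [TodInv, if_pos h, Bool.not_not]
  · have hP : ∃ i, i < k ∧ x i = true := by
      push_neg at h
      obtain ⟨i, hik, hxi⟩ := h
      exact ⟨i, hik, by simpa using hxi⟩
    obtain ⟨hi0k, hxi0⟩ := Nat.find_spec hP
    have hmin : ∀ j, j < Nat.find hP → x j = false := by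
      intro j hj
      by_contra hc
      exact Nat.find_min hP hj ⟨lt_trans hj hi0k, by simpa using hc⟩
    have hT : TodInv x (Nat.find hP) = false := by
      simp only [TodInv, if_pos hmin, hxi0, Bool.not_true]
    have h3 : ¬ ∀ i < k, TodInv x i = true := fun hall => by
      rw [hall _ hi0k] at hT; exact absurd hT (by simp)
    show (if ∀ i < k, TodInv x i = true then !(TodInv x k) else TodInv x k) = x k
    rw [if_neg h3]
    simp only [TodInv, if_neg h]

lemma zIter_succ (n : ℤ) (x : ℕ → Bool) : zIter (n + 1) x = Tod (zIter n x) := by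
  rcases le_or_gt 0 n with hn | hn
  · have h1 : (0:ℤ) ≤ n + 1 := by omega
    have h2 : (n + 1).toNat = n.toNat + 1 := by omega
    simp [zIter, hn, h1, h2, Function.iterate_succ_apply']
  · rcases eq_or_lt_of_le (by omega : n + 1 ≤ 0) with h0 | h0
    · have hn1 : n = -1 := by omega
      subst hn1
      simp [zIter, tod_todinv]
    · have h1 : ¬ (0:ℤ) ≤ n + 1 := by omega
      have h2 : ¬ (0:ℤ) ≤ n := by omega
      have h3 : (-n).toNat = (-(n+1)).toNat + 1 := by omega
      simp [zIter, h1, h2, h3, Function.iterate_succ_apply', tod_todinv]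

lemma zIter_add_nat (n : ℤ) (x : ℕ → Bool) (t : ℕ) :
    zIter (n + t) x = Tod^[t] (zIter n x) := by
  induction t with
  | zero => simp
  | succ t ih =>
    have : n + (t + 1 : ℕ) = (n + t) + 1 := by push_cast; ring
    rw [this, zIter_succ, ih, Function.iterate_succ_apply']

lemma stay (y : ℕ → Bool) (m : ℕ) (h5 : 5 ≤ m) (hy : y ∈ cyl0 m) (t : ℕ) (ht : t < m) :
    Tod^[t] y ∈ Aset := by
  simp only [Aset, Set.mem_iUnion]
  exact ⟨m, h5, t, ht, y, hy, rfl⟩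

lemma enter (y : ℕ → Bool) (hy : y ∈ Aset) (hny : TodInv y ∉ Aset) :
    ∃ m, 5 ≤ m ∧ y ∈ cyl0 m := by
  simp only [Aset, Set.mem_iUnion] at hy
  obtain ⟨i, h5, j, hj, c, hc, hyc⟩ := hy
  cases j with
  | zero => exact ⟨i, h5, by simpa [← hyc] using hc⟩
  | succ j' =>
    exfalso
    apply hny
    have : TodInv y = Tod^[j'] c := by
      rw [← hyc, Function.iterate_succ_apply', todinv_tod]
    rw [this]
    simp only [Aset, Set.mem_iUnion]
    exact ⟨i, h5, j', by omega, c, hc, rfl⟩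

lemma key (x : ℕ → Bool) (n : ℤ) (h0 : zIter n x ∉ Aset) (h1 : zIter (n + 1) x ∈ Aset) :
    ∀ t : ℕ, t < 5 → zIter (n + 1 + t) x ∈ Aset := by
  have hinv : TodInv (zIter (n + 1) x) = zIter n x := by
    rw [zIter_succ, todinv_tod]
  obtain ⟨m, h5, hc⟩ := enter _ h1 (hinv ▸ h0)
  intro t ht
  rw [zIter_add_nat]
  exact stay _ m h5 hc t (by omega)

lemma phi_true {x : ℕ → Bool} {n : ℤ} : Phi x n = true ↔ zIter n x ∈ Aset := by
  simp [Phi]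

lemma phi_false {x : ℕ → Bool} {n : ℤ} : Phi x n = false ↔ zIter n x ∉ Aset := by
  simp [Phi]

/-- the word `αβα` is not in the language of `Y`; more generally, in any
point of `Y`, a `β` immediately following an `α` is followed by at least five consecutive
`β`'s. -/
theorem stmt11 :
    (¬ ∃ z ∈ Ysub, z 0 = false ∧ z 1 = true ∧ z 2 = false) ∧
    ∀ z ∈ Ysub, ∀ n : ℤ, z n = false → z (n + 1) = true →
      ∀ j : ℤ, 1 ≤ j → j ≤ 5 → z (n + j) = true := by
  have main : ∀ z ∈ Ysub, ∀ n : ℤ, z n = false → z (n + 1) = true →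
      ∀ j : ℤ, 1 ≤ j → j ≤ 5 → z (n + j) = true := by
    intro z hz n hn0 hn1 j hj1 hj5
    by_contra hfalse
    have hzj : z (n + j) = false := by
      cases h : z (n + j) with
      | false => rfl
      | true => exact absurd h hfalse
    set U : Set (ℤ → Bool) :=
      {w | w n = false ∧ w (n+1) = true ∧ w (n+j) = false} with hU
    have hUopen : IsOpen U := by
      have hUeq : U = (fun w : ℤ → Bool => w n) ⁻¹' {false} ∩
          ((fun w : ℤ → Bool => w (n+1)) ⁻¹' {true} ∩
           (fun w : ℤ → Bool => w (n+j)) ⁻¹' {false}) := by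
        ext w; simp [hU, Set.mem_setOf_eq, and_assoc]
      rw [hUeq]
      exact (((continuous_apply n).isOpen_preimage _ (isOpen_discrete _)).inter
        (((continuous_apply (n+1)).isOpen_preimage _ (isOpen_discrete _)).inter
         ((continuous_apply (n+j)).isOpen_preimage _ (isOpen_discrete _))))
    have hzU : z ∈ U := ⟨hn0, hn1, hzj⟩
    obtain ⟨w, hwU, x, hxw⟩ := mem_closure_iff.mp hz U hUopen hzU
    subst hxw
    obtain ⟨hw0, hw1, hwj⟩ := hwU
    have h0 : zIter n x ∉ Aset := phi_false.mp hw0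
    have h1 : zIter (n + 1) x ∈ Aset := phi_true.mp hw1
    have hj : zIter (n + j) x ∉ Aset := phi_false.mp hwj
    have ht5 : (j - 1).toNat < 5 := by omega
    have := key x n h0 h1 (j - 1).toNat ht5
    rw [show n + 1 + ((j - 1).toNat : ℤ) = n + j by omega] at this
    exact hj this
  refine ⟨?_, main⟩
  rintro ⟨z, hz, h0, h1, h2⟩
  have := main z hz 0 h0 (by rw [show (0:ℤ)+1 = 1 by ring]; exact h1) 2
    (by norm_num) (by norm_num)
  rw [show (0:ℤ)+2 = 2 by ring] at this
  rw [h2] at this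
  exact Bool.false_ne_true this
end

section
/- Every element y of Y = closure(Φ(X)) is of at least one of the following types: (1) y ∈ Φ(X); (2) there exists i > 0 such that y_n = β for all n ≥ i; (3) there exists j < 0 such that y_n = β for all n ≤ j. -/
/-!
Take a cluster point `x` of the filter `Φ⁻¹(𝓝 y)` on the compact Cantor space. Since `A` is open,
`Φ` is lower semicontinuous, so `Φ(x) ≤ y` coordinatewise. If `Φ(x) ≠ y`, there is `n₀` with
`Φ(x)_{n₀} = α` and `y_{n₀} = β`. Each finite union `A_M` is closed, so for `x'` near `x` with
`Φ(x')_{n₀} = β` the point `T^{n₀} x'` lies in some `T^j([0^i])` with `i > M`, and then `Φ(x')`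
is `β` on a window of length `i` containing `n₀`. These ever longer runs of `β` pass to the
limit `y` as a left or a right tail of `β`.
-/

open MeasureTheory Filter Topology
open scoped ENNReal

-- `Tod` and `TodInv` are `carryFlip true` and `carryFlip false` by definition.
def carryFlip (b : Bool) (x : ℕ → Bool) : ℕ → Bool := fun k =>
  if ∀ i < k, x i = b then !(x k) else x k

lemma forall_carryFlip_eq_not_iff (b : Bool) (x : ℕ → Bool) (k : ℕ) :
    (∀ i < k, carryFlip b x i = !b) ↔ ∀ i < k, x i = b := by
  induction k with
  | zero => simp
  | succ k ih =>
    simp only [Nat.forall_lt_succ_right, ih]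
    refine and_congr_right fun h => ?_
    rw [carryFlip, if_pos h]
    cases b <;> cases x k <;> simp

lemma carryFlip_not_carryFlip (b : Bool) (x : ℕ → Bool) : carryFlip (!b) (carryFlip b x) = x := by
  funext k
  rw [carryFlip]
  simp only [forall_carryFlip_eq_not_iff]
  by_cases h : ∀ i < k, x i = b
  · rw [if_pos h, carryFlip, if_pos h, Bool.not_not]
  · rw [if_neg h, carryFlip, if_neg h]

lemma isClopen_setOf_forall_lt_eq (k : ℕ) (b : Bool) :
    IsClopen {x : ℕ → Bool | ∀ i < k, x i = b} := by
  have : {x : ℕ → Bool | ∀ i < k, x i = b} = ⋂ i ∈ Set.Iio k, (fun x => x i) ⁻¹' {b} := by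
    ext; simp
  rw [this]
  exact (Set.finite_Iio k).isClopen_biInter fun i _ =>
    (isClopen_discrete {b}).preimage (continuous_apply i)

lemma continuous_carryFlip (b : Bool) : Continuous (carryFlip b) := by
  refine continuous_pi fun k => Continuous.if (fun x hx => ?_)
    ((continuous_of_discreteTopology (f := not)).comp (continuous_apply k)) (continuous_apply k)
  rw [(isClopen_setOf_forall_lt_eq k b).frontier_eq] at hx
  exact hx.elim

lemma leftInverse_todInv_tod : Function.LeftInverse TodInv Tod := carryFlip_not_carryFlip true

lemma leftInverse_tod_todInv : Function.LeftInverse Tod TodInv := carryFlip_not_carryFlip false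

def todPerm : Equiv.Perm (ℕ → Bool) := ⟨Tod, TodInv, leftInverse_todInv_tod, leftInverse_tod_todInv⟩

lemma zIter_eq_zpow (n : ℤ) : zIter n = ⇑(todPerm ^ n) := by
  funext x
  cases n with
  | ofNat n => rw [Int.ofNat_eq_natCast, zpow_natCast, Equiv.Perm.coe_pow]; rfl
  | negSucc n =>
    rw [zpow_negSucc, ← inv_pow, Equiv.Perm.coe_pow]
    rfl

lemma zIter_zero (x : ℕ → Bool) : zIter 0 x = x := rfl

lemma zIter_add (m n : ℤ) (x : ℕ → Bool) : zIter (m + n) x = zIter m (zIter n x) := by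
  simp only [zIter_eq_zpow, zpow_add, Equiv.Perm.mul_apply]

lemma zIter_natCast (j : ℕ) : zIter j = Tod^[j] := by
  funext x; simp [zIter]

lemma continuous_zIter (n : ℤ) : Continuous (zIter n) := by
  unfold zIter
  split
  · exact (continuous_carryFlip true).iterate _
  · exact (continuous_carryFlip false).iterate _

lemma isClopen_image_iterate_cyl0 (i j : ℕ) : IsClopen (Tod^[j] '' cyl0 i) := by
  rw [Set.image_eq_preimage_of_inverse (leftInverse_todInv_tod.iterate j)
    (leftInverse_tod_todInv.iterate j)]
  exact (isClopen_setOf_forall_lt_eq i false).preimage ((continuous_carryFlip false).iterate j)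

lemma isOpen_Aset : IsOpen Aset :=
  isOpen_biUnion fun i _ => isOpen_biUnion fun j _ => (isClopen_image_iterate_cyl0 i j).isOpen

lemma isClosed_Ak (M : ℕ) : IsClosed (Ak M) := by
  have : Ak M = ⋃ i ∈ Set.Icc 5 M, ⋃ j ∈ Set.Iio i, Tod^[j] '' cyl0 i := by
    simp only [Ak, Set.mem_Icc, Set.mem_Iio, Set.iUnion_and]
  rw [this]
  exact (Set.finite_Icc 5 M).isClosed_biUnion fun i _ =>
    (Set.finite_Iio i).isClosed_biUnion fun j _ => (isClopen_image_iterate_cyl0 i j).isClosed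

lemma phi_eq_true_iff (x : ℕ → Bool) (n : ℤ) : Phi x n = true ↔ zIter n x ∈ Aset := by
  simp [Phi]

def HasTrueRun (f : ℤ → Bool) (n₀ : ℤ) (M : ℕ) : Prop :=
  ∃ a b : ℤ, n₀ ∈ Set.Ico a b ∧ (M : ℤ) ≤ b - a ∧ ∀ n ∈ Set.Ico a b, f n = true

lemma HasTrueRun.mono {f : ℤ → Bool} {n₀ : ℤ} {M N : ℕ} (h : HasTrueRun f n₀ N) (hMN : M ≤ N) :
    HasTrueRun f n₀ M := by
  obtain ⟨a, b, hn₀, hlen, htrue⟩ := h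
  exact ⟨a, b, hn₀, by omega, htrue⟩

lemma zIter_mem_Aset {i : ℕ} (hi : 5 ≤ i) {w : ℕ → Bool} (hw : w ∈ cyl0 i) {l : ℤ}
    (hl₀ : 0 ≤ l) (hli : l < i) : zIter l w ∈ Aset := by
  lift l to ℕ using hl₀
  rw [zIter_natCast]
  exact Set.mem_biUnion hi (Set.mem_biUnion (by omega : l < i) (Set.mem_image_of_mem _ hw))

-- `w := T^{-j} T^{n₀} z` lies in `[0^i]`, and `T^l w ∈ A` for `0 ≤ l < i`.
lemma hasTrueRun_phi {z : ℕ → Bool} {n₀ : ℤ} {i j : ℕ} (hi : 5 ≤ i) (hj : j < i)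
    (hz : zIter n₀ z ∈ Tod^[j] '' cyl0 i) : HasTrueRun (Phi z) n₀ i := by
  obtain ⟨w, hw, hwz⟩ := hz
  refine ⟨n₀ - j, n₀ - j + i, ⟨by omega, by omega⟩, by omega, fun n hn => ?_⟩
  have hw' : zIter (-j) (zIter n₀ z) = w := by
    rw [← hwz, ← zIter_natCast, ← zIter_add, neg_add_cancel, zIter_zero]
  have hzn : zIter n z = zIter (n - n₀ + j) w := by
    rw [← hw', ← zIter_add, ← zIter_add]
    congr 1
    ring
  rw [phi_eq_true_iff, hzn]
  exact zIter_mem_Aset hi hw (by linarith [hn.1]) (by linarith [hn.2])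

lemma eventually_phi_eq_true {x : ℕ → Bool} {n : ℤ} (h : Phi x n = true) :
    ∀ᶠ x' in 𝓝 x, Phi x' n = true := by
  rw [phi_eq_true_iff] at h
  filter_upwards [(continuous_zIter n).continuousAt.preimage_mem_nhds (isOpen_Aset.mem_nhds h)]
    with x' hx'
  exact (phi_eq_true_iff x' n).2 hx'

/-- Near a point where `Φ` reads `α` at `n₀`, a `β` at `n₀` can only come from a piece
`T^j([0^i])` with `i` large, since the finite union `A_M` is closed. -/
lemma eventually_hasTrueRun {x : ℕ → Bool} {n₀ : ℤ} (h : Phi x n₀ = false) (M : ℕ) :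
    ∀ᶠ x' in 𝓝 x, Phi x' n₀ = true → HasTrueRun (Phi x') n₀ M := by
  have hx : zIter n₀ x ∈ (Ak M)ᶜ := by
    intro hA
    simp only [Ak, Set.mem_iUnion, exists_prop] at hA
    obtain ⟨i, hi, -, j, hj, hmem⟩ := hA
    rw [← Bool.not_eq_true, phi_eq_true_iff] at h
    exact h (Set.mem_biUnion hi (Set.mem_biUnion hj hmem))
  filter_upwards [(continuous_zIter n₀).continuousAt.preimage_mem_nhds
    ((isClosed_Ak M).isOpen_compl.mem_nhds hx)] with x' hx' htrue
  rw [phi_eq_true_iff] at htrue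
  simp only [Aset, Set.mem_iUnion, exists_prop] at htrue
  obtain ⟨i, hi, j, hj, hmem⟩ := htrue
  have hMi : M ≤ i := by
    by_contra! hiM
    exact hx' (Set.mem_biUnion hi (Set.mem_iUnion_of_mem hiM.le (Set.mem_biUnion hj hmem)))
  exact (hasTrueRun_phi hi hj hmem).mono hMi

lemma eventually_apply_eq_of_tendsto {ι α β : Type*} [TopologicalSpace β] [DiscreteTopology β]
    {l : Filter ι} {f : ι → α → β} {y : α → β} (hf : Tendsto f l (𝓝 y)) (a : α) :
    ∀ᶠ k in l, f k a = y a :=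
  (tendsto_pi_nhds.1 hf a).eventually_mem ((isOpen_discrete {y a}).mem_nhds rfl)

lemma phi_le_of_tendsto {x : ℕ → Bool} {y : ℤ → Bool} {l : Filter (ℕ → Bool)} [l.NeBot]
    (hx : l ≤ 𝓝 x) (hy : Tendsto Phi l (𝓝 y)) : Phi x ≤ y := by
  intro n
  cases h : Phi x n with
  | false => exact Bool.false_le _
  | true =>
    obtain ⟨x', hx', hx'y⟩ :=
      (((eventually_phi_eq_true h).filter_mono hx).and (eventually_apply_eq_of_tendsto hy n)).exists
    rw [← hx'y, hx']

/-- Either `y` is `true` on all of `(-∞, n₀]`, or some `y m = false` with `m ≤ n₀` eventually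
cuts the runs of `f k` off on the left, so that they grow to the right. -/
theorem tails_of_tendsto_of_hasTrueRun {ι : Type*} {l : Filter ι} [l.NeBot] {f : ι → ℤ → Bool}
    {y : ℤ → Bool} (hf : Tendsto f l (𝓝 y)) {n₀ : ℤ} (hy : y n₀ = true)
    (hrun : ∀ M : ℕ, ∀ᶠ k in l, f k n₀ = true → HasTrueRun (f k) n₀ M) :
    (∃ i : ℤ, 0 < i ∧ ∀ n ≥ i, y n = true) ∨ (∃ j : ℤ, j < 0 ∧ ∀ n ≤ j, y n = true) := by
  by_cases hleft : ∀ m ≤ n₀, y m = true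
  · exact Or.inr ⟨min n₀ (-1), by omega, fun n hn => hleft n (by omega)⟩
  push Not at hleft
  obtain ⟨m, hm, hym⟩ := hleft
  refine Or.inl ⟨max n₀ 1, by omega, fun n hn => ?_⟩
  obtain ⟨k, hkm, hkn₀, hkrun, hkn⟩ := ((eventually_apply_eq_of_tendsto hf m).and
    ((eventually_apply_eq_of_tendsto hf n₀).and ((hrun (n - m).toNat).and
    (eventually_apply_eq_of_tendsto hf n)))).exists
  obtain ⟨a, b, ⟨ha, hb⟩, hlen, htrue⟩ := hkrun (hkn₀.trans hy)
  have hma : m < a := by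
    by_contra! ham
    exact hym (hkm ▸ htrue m ⟨ham, by omega⟩)
  rw [← hkn]
  exact htrue n ⟨by omega, by omega⟩

/-- every `y ∈ Y` is in `Φ(X)`, or has a right tail of all `β`'s, or has a
left tail of all `β`'s. -/
theorem stmt14 (y : ℤ → Bool) (hy : y ∈ Ysub) :
    y ∈ Set.range Phi ∨
    (∃ i : ℤ, 0 < i ∧ ∀ n ≥ i, y n = true) ∨
    (∃ j : ℤ, j < 0 ∧ ∀ n ≤ j, y n = true) := by
  have : (comap Phi (𝓝 y)).NeBot := comap_neBot fun t ht => by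
    obtain ⟨_, hyt, x, rfl⟩ := mem_closure_iff_nhds.1 hy t ht
    exact ⟨x, hyt⟩
  obtain ⟨x, hx⟩ := exists_clusterPt_of_compactSpace (comap Phi (𝓝 y))
  have : (𝓝 x ⊓ comap Phi (𝓝 y)).NeBot := hx
  have hPhi : Tendsto Phi (𝓝 x ⊓ comap Phi (𝓝 y)) (𝓝 y) := tendsto_comap.mono_left inf_le_right
  by_cases hxy : Phi x = y
  · exact Or.inl ⟨x, hxy⟩
  obtain ⟨n₀, hn₀⟩ := Function.ne_iff.1 hxy
  obtain ⟨hx₀, hy₀⟩ := Bool.lt_iff.1 (lt_of_le_of_ne (phi_le_of_tendsto inf_le_left hPhi n₀) hn₀)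
  exact Or.inr (tails_of_tendsto_of_hasTrueRun hPhi hy₀ fun M =>
    (eventually_hasTrueRun hx₀ M).filter_mono inf_le_left)
end
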